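/- arXiv:1402.4104 — 7 statements merged into one kernel-verified Lean document; each statement's English description precedes it below -/
import Mathlib

section
/- Let f_A, f_a > 0, D_A, D_a, C_{A,A}, C_{A,a}, C_{a,A}, C_{a,a} be real numbers, r ∈ [0,1], and let n_{Ab1}, n_{Ab2}, n_{ab1}, n_{ab2} : [0,∞) → (0,∞) be differentiable functions satisfying, for each (α,β) ∈ {A,a}×{b1,b2} and all t ≥ 0, n_{αβ}'(t) = (f_α − D_α − C_{α,A} n_A(t) − C_{α,a} n_a(t))·n_{αβ}(t) + r f_A f_a·(n_{ᾱβ}(t) n_{αβ̄}(t) − n_{αβ}(t) n_{ᾱβ̄}(t))/(f_A n_A(t) + f_a n_a(t)), where n_A = n_{Ab1} + n_{Ab2}, n_a = n_{ab1} + n_{ab2}, and ᾱ, β̄ denote the complementary alleles. Then: (i) for α ∈ {A,a}, n_α'(t) = (f_α − D_α − C_{α,A} n_A(t) − C_{α,a} n_a(t))·n_α(t); (ii) g := n_{Ab1}/n_A − n_{ab1}/n_a satisfies g'(t) = −g(t)·r f_A f_a (n_A(t) + n_a(t))/(f_A n_A(t) + f_a n_a(t)); (iii) p := n_{ab1}/n_a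 satisfies p'(t) = g(t)·r f_A f_a n_A(t)/(f_A n_A(t) + f_a n_a(t)). -/
/-!
Within each population the recombination terms of `n_{αb₁}` and `n_{αb₂}` are opposite, so
they cancel in the total `n_α`, which therefore solves the Lotka–Volterra equation, while the
proportion `n_{αb₁}/n_α` moves only by the recombination term of `n_{αb₁}` divided by `n_α`.
That term equals `∓ r f_A f_a n_A n_a g / (f_A n_A + f_a n_a)`, which gives the equations for
`p` and `g`.
-/

section Exchange

variable {x y : ℝ → ℝ} {m R S t : ℝ}

theorem HasDerivAt.add_of_exchange (hx : HasDerivAt x (m * x t + R) t)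
    (hy : HasDerivAt y (m * y t + S) t) (hRS : R + S = 0) :
    HasDerivAt (fun u => x u + y u) (m * (x t + y t)) t :=
  (hx.add hy).congr_deriv (by linear_combination hRS)

theorem HasDerivAt.div_add_of_exchange (hx : HasDerivAt x (m * x t + R) t)
    (hy : HasDerivAt y (m * y t + S) t) (hRS : R + S = 0) (hxy : x t + y t ≠ 0) :
    HasDerivAt (fun u => x u / (x u + y u)) (R / (x t + y t)) t :=
  (hx.div (hx.add_of_exchange hy hRS) hxy).congr_deriv (by field_simp; ring)

end Exchange

theorem four_dim_system_change_of_variables_general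
    (fA fa DA Da CAA CAa CaA Caa r : ℝ)
    (nAb1 nAb2 nab1 nab2 : ℝ → ℝ)
    (hposAb1 : ∀ t, 0 ≤ t → 0 < nAb1 t) (hposAb2 : ∀ t, 0 ≤ t → 0 < nAb2 t)
    (hposab1 : ∀ t, 0 ≤ t → 0 < nab1 t) (hposab2 : ∀ t, 0 ≤ t → 0 < nab2 t)
    (hodeAb1 : ∀ t, 0 ≤ t → HasDerivAt nAb1
      ((fA - DA - CAA * (nAb1 t + nAb2 t) - CAa * (nab1 t + nab2 t)) * nAb1 t
        + r * fA * fa * (nab1 t * nAb2 t - nAb1 t * nab2 t) /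
          (fA * (nAb1 t + nAb2 t) + fa * (nab1 t + nab2 t))) t)
    (hodeAb2 : ∀ t, 0 ≤ t → HasDerivAt nAb2
      ((fA - DA - CAA * (nAb1 t + nAb2 t) - CAa * (nab1 t + nab2 t)) * nAb2 t
        + r * fA * fa * (nab2 t * nAb1 t - nAb2 t * nab1 t) /
          (fA * (nAb1 t + nAb2 t) + fa * (nab1 t + nab2 t))) t)
    (hodeab1 : ∀ t, 0 ≤ t → HasDerivAt nab1
      ((fa - Da - CaA * (nAb1 t + nAb2 t) - Caa * (nab1 t + nab2 t)) * nab1 t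
        + r * fA * fa * (nAb1 t * nab2 t - nab1 t * nAb2 t) /
          (fA * (nAb1 t + nAb2 t) + fa * (nab1 t + nab2 t))) t)
    (hodeab2 : ∀ t, 0 ≤ t → HasDerivAt nab2
      ((fa - Da - CaA * (nAb1 t + nAb2 t) - Caa * (nab1 t + nab2 t)) * nab2 t
        + r * fA * fa * (nAb2 t * nab1 t - nab2 t * nAb1 t) /
          (fA * (nAb1 t + nAb2 t) + fa * (nab1 t + nab2 t))) t) :
    (∀ t, 0 ≤ t → HasDerivAt (fun u => nAb1 u + nAb2 u)
        ((fA - DA - CAA * (nAb1 t + nAb2 t) - CAa * (nab1 t + nab2 t)) *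
          (nAb1 t + nAb2 t)) t) ∧
    (∀ t, 0 ≤ t → HasDerivAt (fun u => nab1 u + nab2 u)
        ((fa - Da - CaA * (nAb1 t + nAb2 t) - Caa * (nab1 t + nab2 t)) *
          (nab1 t + nab2 t)) t) ∧
    (∀ t, 0 ≤ t → HasDerivAt
        (fun u => nAb1 u / (nAb1 u + nAb2 u) - nab1 u / (nab1 u + nab2 u))
        (-(nAb1 t / (nAb1 t + nAb2 t) - nab1 t / (nab1 t + nab2 t)) *
          (r * fA * fa * ((nAb1 t + nAb2 t) + (nab1 t + nab2 t)) /
            (fA * (nAb1 t + nAb2 t) + fa * (nab1 t + nab2 t)))) t) ∧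
    (∀ t, 0 ≤ t → HasDerivAt (fun u => nab1 u / (nab1 u + nab2 u))
        ((nAb1 t / (nAb1 t + nAb2 t) - nab1 t / (nab1 t + nab2 t)) *
          (r * fA * fa * (nAb1 t + nAb2 t) /
            (fA * (nAb1 t + nAb2 t) + fa * (nab1 t + nab2 t)))) t) := by
  have hA : ∀ t, 0 ≤ t → nAb1 t + nAb2 t ≠ 0 := fun t ht =>
    (add_pos (hposAb1 t ht) (hposAb2 t ht)).ne'
  have ha : ∀ t, 0 ≤ t → nab1 t + nab2 t ≠ 0 := fun t ht =>
    (add_pos (hposab1 t ht) (hposab2 t ht)).ne'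
  refine ⟨fun t ht => (hodeAb1 t ht).add_of_exchange (hodeAb2 t ht) (by ring),
    fun t ht => (hodeab1 t ht).add_of_exchange (hodeab2 t ht) (by ring), fun t ht => ?_,
    fun t ht => ?_⟩
  · have hq := (hodeAb1 t ht).div_add_of_exchange (hodeAb2 t ht) (by ring) (hA t ht)
    have hp := (hodeab1 t ht).div_add_of_exchange (hodeab2 t ht) (by ring) (ha t ht)
    refine (hq.sub hp).congr_deriv ?_
    field_simp [hA t ht, ha t ht]
    ring
  · have hp := (hodeab1 t ht).div_add_of_exchange (hodeab2 t ht) (by ring) (ha t ht)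
    refine hp.congr_deriv ?_
    field_simp [hA t ht, ha t ht]
    ring

/-- Change of variables for the four-dimensional deterministic system: if the
four positive densities `n_{αβ}` solve the recombination ODE system, then the
total densities `n_A, n_a` solve the Lotka–Volterra system, the difference of
neutral proportions `g = n_{Ab₁}/n_A − n_{ab₁}/n_a` decays with rate
`r f_A f_a (n_A+n_a)/(f_A n_A+f_a n_a)`, and the neutral proportion
`p = n_{ab₁}/n_a` satisfies `p' = g · r f_A f_a n_A/(f_A n_A+f_a n_a)`. -/
theorem four_dim_system_change_of_variables
    (fA fa DA Da CAA CAa CaA Caa r : ℝ)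
    (hfA : 0 < fA) (hfa : 0 < fa) (hr : r ∈ Set.Icc (0:ℝ) 1)
    (nAb1 nAb2 nab1 nab2 : ℝ → ℝ)
    (hposAb1 : ∀ t, 0 ≤ t → 0 < nAb1 t) (hposAb2 : ∀ t, 0 ≤ t → 0 < nAb2 t)
    (hposab1 : ∀ t, 0 ≤ t → 0 < nab1 t) (hposab2 : ∀ t, 0 ≤ t → 0 < nab2 t)
    (hodeAb1 : ∀ t, 0 ≤ t → HasDerivAt nAb1
      ((fA - DA - CAA * (nAb1 t + nAb2 t) - CAa * (nab1 t + nab2 t)) * nAb1 t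
        + r * fA * fa * (nab1 t * nAb2 t - nAb1 t * nab2 t) /
          (fA * (nAb1 t + nAb2 t) + fa * (nab1 t + nab2 t))) t)
    (hodeAb2 : ∀ t, 0 ≤ t → HasDerivAt nAb2
      ((fA - DA - CAA * (nAb1 t + nAb2 t) - CAa * (nab1 t + nab2 t)) * nAb2 t
        + r * fA * fa * (nab2 t * nAb1 t - nAb2 t * nab1 t) /
          (fA * (nAb1 t + nAb2 t) + fa * (nab1 t + nab2 t))) t)
    (hodeab1 : ∀ t, 0 ≤ t → HasDerivAt nab1
      ((fa - Da - CaA * (nAb1 t + nAb2 t) - Caa * (nab1 t + nab2 t)) * nab1 t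
        + r * fA * fa * (nAb1 t * nab2 t - nab1 t * nAb2 t) /
          (fA * (nAb1 t + nAb2 t) + fa * (nab1 t + nab2 t))) t)
    (hodeab2 : ∀ t, 0 ≤ t → HasDerivAt nab2
      ((fa - Da - CaA * (nAb1 t + nAb2 t) - Caa * (nab1 t + nab2 t)) * nab2 t
        + r * fA * fa * (nAb2 t * nab1 t - nab2 t * nAb1 t) /
          (fA * (nAb1 t + nAb2 t) + fa * (nab1 t + nab2 t))) t) :
    (∀ t, 0 ≤ t → HasDerivAt (fun u => nAb1 u + nAb2 u)
        ((fA - DA - CAA * (nAb1 t + nAb2 t) - CAa * (nab1 t + nab2 t)) *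
          (nAb1 t + nAb2 t)) t) ∧
    (∀ t, 0 ≤ t → HasDerivAt (fun u => nab1 u + nab2 u)
        ((fa - Da - CaA * (nAb1 t + nAb2 t) - Caa * (nab1 t + nab2 t)) *
          (nab1 t + nab2 t)) t) ∧
    (∀ t, 0 ≤ t → HasDerivAt
        (fun u => nAb1 u / (nAb1 u + nAb2 u) - nab1 u / (nab1 u + nab2 u))
        (-(nAb1 t / (nAb1 t + nAb2 t) - nab1 t / (nab1 t + nab2 t)) *
          (r * fA * fa * ((nAb1 t + nAb2 t) + (nab1 t + nab2 t)) /
            (fA * (nAb1 t + nAb2 t) + fa * (nab1 t + nab2 t)))) t) ∧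
    (∀ t, 0 ≤ t → HasDerivAt (fun u => nab1 u / (nab1 u + nab2 u))
        ((nAb1 t / (nAb1 t + nAb2 t) - nab1 t / (nab1 t + nab2 t)) *
          (r * fA * fa * (nAb1 t + nAb2 t) /
            (fA * (nAb1 t + nAb2 t) + fa * (nab1 t + nab2 t)))) t) :=
  four_dim_system_change_of_variables_general fA fa DA Da CAA CAa CaA Caa r nAb1 nAb2 nab1 nab2
    hposAb1 hposAb2 hposab1 hposab2 hodeAb1 hodeAb2 hodeab1 hodeab2
end

section
/- Let f_A, f_a > 0, let n_A, n_a : [0,∞) → [0,∞) be continuous with f_A n_A(s) + f_a n_a(s) > 0 for all s ≥ 0, and let r ∈ [0,1]. Suppose g, p : [0,∞) → ℝ are differentiable and satisfy, for all t ≥ 0, g'(t) = −g(t)·r f_A f_a (n_A(t) + n_a(t))/(f_A n_A(t) + f_a n_a(t)) and p'(t) = g(t)·r f_A f_a n_A(t)/(f_A n_A(t) + f_a n_a(t)). Then for all t ≥ 0, p(t) = p(0) + g(0)·F(r,t), where F(r,t) = ∫₀ᵗ [r f_A f_a n_A(s)/(f_A n_A(s) + f_a n_a(s))]·exp(−r f_A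 f_a ∫₀ˢ (n_A(u) + n_a(u))/(f_A n_A(u) + f_a n_a(u)) du) ds. -/
/-!
The equation for `g` is linear, so `g(t) · exp(r f_A f_a ∫₀ᵗ (n_A+n_a)/(f_A n_A+f_a n_a))` has
derivative zero and `g(t) = g(0) · exp(−r f_A f_a ∫₀ᵗ …)`. Substituting this into `p'` and
integrating from `0` to `t` gives `p(t) − p(0) = g(0) · F(r,t)`.
-/

open MeasureTheory

/-- The recombination weight function
`F(r,t) = ∫₀ᵗ (r f_A f_a n_A(s)/(f_A n_A(s)+f_a n_a(s)))
          exp(−r f_A f_a ∫₀ˢ (n_A(u)+n_a(u))/(f_A n_A(u)+f_a n_a(u)) du) ds`. -/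
noncomputable def Fweight (fA fa r : ℝ) (nA na : ℝ → ℝ) (t : ℝ) : ℝ :=
  ∫ s in (0:ℝ)..t,
    (r * fA * fa * nA s / (fA * nA s + fa * na s)) *
      Real.exp (-(r * fA * fa *
        ∫ u in (0:ℝ)..s, (nA u + na u) / (fA * nA u + fa * na u)))

open Set Real intervalIntegral

section LinearODE

variable {g k : ℝ → ℝ} {a b : ℝ}

theorem hasDerivAt_integral_of_mem_Ioo (hk : ContinuousOn k (Icc a b)) {x : ℝ}
    (hx : x ∈ Ioo a b) : HasDerivAt (fun s => ∫ u in a..s, k u) (k x) x :=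
  have hkx : ContinuousAt k x := hk.continuousAt (Icc_mem_nhds hx.1 hx.2)
  integral_hasDerivAt_right
    ((hk.mono (Icc_subset_Icc_right hx.2.le)).intervalIntegrable_of_Icc hx.1.le)
    ((hk.mono Ioo_subset_Icc_self).stronglyMeasurableAtFilter isOpen_Ioo x hx) hkx

theorem eq_mul_exp_neg_integral_of_hasDerivAt (hab : a ≤ b) (hk : ContinuousOn k (Icc a b))
    (hg : ContinuousOn g (Icc a b)) (hg' : ∀ x ∈ Ioo a b, HasDerivAt g (-(g x) * k x) x) :
    g b = g a * exp (-∫ u in a..b, k u) := by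
  set K : ℝ → ℝ := fun s => ∫ u in a..s, k u
  have hK : ContinuousOn K (Icc a b) := by
    rw [← uIcc_of_le hab] at hk ⊢
    exact continuousOn_primitive_interval hk.integrableOn_uIcc
  have hderiv : ∀ x ∈ Ioo a b, HasDerivAt (fun s => g s * exp (K s)) 0 x := fun x hx =>
    ((hg' x hx).mul (hasDerivAt_integral_of_mem_Ioo hk hx).exp).congr_deriv (by ring)
  have hconst : ∫ _ in a..b, (0:ℝ) = g b * exp (K b) - g a * exp (K a) :=
    integral_eq_sub_of_hasDerivAt_of_le hab (hg.mul hK.rexp) hderiv intervalIntegrable_const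
  have hKa : K a = 0 := integral_same
  rw [intervalIntegral.integral_zero, hKa, exp_zero, mul_one, eq_comm, sub_eq_zero] at hconst
  rw [exp_neg, ← hconst, mul_inv_cancel_right₀ (exp_ne_zero _)]

end LinearODE

theorem reduced_system_solution_general
    (fA fa : ℝ)
    (nA na : ℝ → ℝ)
    (hcA : ContinuousOn nA (Set.Ici 0)) (hca : ContinuousOn na (Set.Ici 0))
    (hden : ∀ s, 0 ≤ s → 0 < fA * nA s + fa * na s)
    (r : ℝ)
    (g p : ℝ → ℝ)
    (hg : ∀ t, 0 ≤ t → HasDerivAt g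
      (-(g t) * (r * fA * fa * (nA t + na t) / (fA * nA t + fa * na t))) t)
    (hp : ∀ t, 0 ≤ t → HasDerivAt p
      (g t * (r * fA * fa * nA t / (fA * nA t + fa * na t))) t) :
    ∀ t, 0 ≤ t → p t = p 0 + g 0 * Fweight fA fa r nA na t := by
  intro t ht
  have hden_ne : ∀ s ∈ Ici (0:ℝ), fA * nA s + fa * na s ≠ 0 := fun s hs => (hden s hs).ne'
  have hcden : ContinuousOn (fun s => fA * nA s + fa * na s) (Ici 0) :=
    (continuousOn_const.mul hcA).add (continuousOn_const.mul hca)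
  have hrate : ContinuousOn (fun s => r * fA * fa * ((nA s + na s) / (fA * nA s + fa * na s)))
      (Ici 0) := continuousOn_const.mul ((hcA.add hca).div hcden hden_ne)
  have hweight : ContinuousOn (fun s => r * fA * fa * nA s / (fA * nA s + fa * na s)) (Ici 0) :=
    (continuousOn_const.mul hcA).div hcden hden_ne
  have hgc : ContinuousOn g (Ici 0) := fun s hs => (hg s hs).continuousAt.continuousWithinAt
  have hg_eq : ∀ s ∈ Icc 0 t, g s = g 0 * exp (-(r * fA * fa *
      ∫ u in (0:ℝ)..s, (nA u + na u) / (fA * nA u + fa * na u))) := fun s hs => by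
    rw [← intervalIntegral.integral_const_mul]
    refine eq_mul_exp_neg_integral_of_hasDerivAt hs.1 (hrate.mono Icc_subset_Ici_self)
      (hgc.mono Icc_subset_Ici_self) fun x hx => ?_
    simpa only [mul_div_assoc] using hg x hx.1.le
  have hp_int : p t - p 0 = ∫ s in (0:ℝ)..t,
      g s * (r * fA * fa * nA s / (fA * nA s + fa * na s)) :=
    (integral_eq_sub_of_hasDerivAt (fun x hx => hp x (uIcc_of_le ht ▸ hx).1)
      (((hgc.mul hweight).mono Icc_subset_Ici_self).intervalIntegrable_of_Icc ht)).symm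
  rw [Fweight, ← intervalIntegral.integral_const_mul, ← sub_eq_iff_eq_add', hp_int]
  refine integral_congr fun s hs => ?_
  rw [hg_eq s (uIcc_of_le ht ▸ hs)]
  ring

/-- Integration of the reduced system: if `g' = −g·r f_A f_a (n_A+n_a)/(f_A n_A+f_a n_a)`
and `p' = g·r f_A f_a n_A/(f_A n_A+f_a n_a)`, then `p(t) = p(0) + g(0)·F(r,t)`. -/
theorem reduced_system_solution
    (fA fa : ℝ) (hfA : 0 < fA) (hfa : 0 < fa)
    (nA na : ℝ → ℝ)
    (hcA : ContinuousOn nA (Set.Ici 0)) (hca : ContinuousOn na (Set.Ici 0))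
    (hnA : ∀ s, 0 ≤ s → 0 ≤ nA s) (hna : ∀ s, 0 ≤ s → 0 ≤ na s)
    (hden : ∀ s, 0 ≤ s → 0 < fA * nA s + fa * na s)
    (r : ℝ) (hr : r ∈ Set.Icc (0:ℝ) 1)
    (g p : ℝ → ℝ)
    (hg : ∀ t, 0 ≤ t → HasDerivAt g
      (-(g t) * (r * fA * fa * (nA t + na t) / (fA * nA t + fa * na t))) t)
    (hp : ∀ t, 0 ≤ t → HasDerivAt p
      (g t * (r * fA * fa * nA t / (fA * nA t + fa * na t))) t) :
    ∀ t, 0 ≤ t → p t = p 0 + g 0 * Fweight fA fa r nA na t :=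
  reduced_system_solution_general fA fa nA na hcA hca hden r g p hg hp
end

section
/- Let f_A, D_A be real numbers, C_{A,A} ≥ 0, C_{A,a} > 0, n̄_a ∈ ℝ, and set S = f_A − D_A − C_{A,a}·n̄_a; assume S < 0. Let 0 < ε ≤ |S|/C_{A,a} and t₀ ≥ 0. Suppose n_A : [0,∞) → [0,∞) and n_a : [0,∞) → ℝ with n_A differentiable satisfying n_A'(t) = (f_A − D_A − C_{A,A} n_A(t) − C_{A,a} n_a(t))·n_A(t) for all t ≥ 0, and n_a(t) ≥ n̄_a − ε/2 for all t ≥ t₀. Then for all t ≥ t₀, n_A(t) ≤ n_A(t₀)·exp(S·(t − t₀)/2). -/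
/-- Exponential decay of the `A`-population once the `a`-population density
stays above `n̄_a − ε/2`: if `S = f_A − D_A − C_{A,a} n̄_a < 0` and
`0 < ε ≤ |S|/C_{A,a}`, then for `t ≥ t₀`,
`n_A(t) ≤ n_A(t₀) exp(S (t − t₀)/2)`. -/
theorem A_population_exponential_decay
    (fA DA CAA CAa nbara : ℝ) (hCAA : 0 ≤ CAA) (hCAa : 0 < CAa)
    (S : ℝ) (hS : S = fA - DA - CAa * nbara) (hSneg : S < 0)
    (ε : ℝ) (hε0 : 0 < ε) (hεle : ε ≤ |S| / CAa)
    (t₀ : ℝ) (ht₀ : 0 ≤ t₀)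
    (nA na : ℝ → ℝ)
    (hnAnn : ∀ t, 0 ≤ t → 0 ≤ nA t)
    (hode : ∀ t, 0 ≤ t →
      HasDerivAt nA ((fA - DA - CAA * nA t - CAa * na t) * nA t) t)
    (hna : ∀ t, t₀ ≤ t → nbara - ε / 2 ≤ na t) :
    ∀ t, t₀ ≤ t → nA t ≤ nA t₀ * Real.exp (S * (t - t₀) / 2) := by
  intro t ht
  set g : ℝ → ℝ := fun s => nA s * Real.exp (-(S / 2) * s) with hg
  have hCAaε : CAa * ε ≤ -S := by
    have h := (le_div_iff₀ hCAa).mp hεle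
    rw [abs_of_neg hSneg] at h
    linarith
  -- derivative of g at any s ≥ t₀
  have hgderiv : ∀ s, t₀ ≤ s → HasDerivAt g
      (((fA - DA - CAA * nA s - CAa * na s) * nA s) * Real.exp (-(S / 2) * s)
        + nA s * (Real.exp (-(S / 2) * s) * (-(S / 2)))) s := by
    intro s hs
    have h1 := hode s (le_trans ht₀ hs)
    have h2 : HasDerivAt (fun x : ℝ => Real.exp (-(S / 2) * x))
        (Real.exp (-(S / 2) * s) * (-(S / 2))) s := by
      simpa using ((hasDerivAt_id s).const_mul (-(S / 2))).exp
    have h3 := h1.mul h2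
    rw [hg]
    exact h3
  have hgnonpos : ∀ s, t₀ ≤ s →
      ((fA - DA - CAA * nA s - CAa * na s) * nA s) * Real.exp (-(S / 2) * s)
        + nA s * (Real.exp (-(S / 2) * s) * (-(S / 2))) ≤ 0 := by
    intro s hs
    have hnA : 0 ≤ nA s := hnAnn s (le_trans ht₀ hs)
    have hexp : 0 < Real.exp (-(S / 2) * s) := Real.exp_pos _
    have hbr : fA - DA - CAA * nA s - CAa * na s ≤ S / 2 := by
      have hn := hna s hs
      have : CAa * (nbara - ε / 2) ≤ CAa * na s :=
        mul_le_mul_of_nonneg_left hn hCAa.le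
      have hCC : 0 ≤ CAA * nA s := mul_nonneg hCAA hnA
      nlinarith
    have key : ((fA - DA - CAA * nA s - CAa * na s) - S / 2) * nA s ≤ 0 :=
      mul_nonpos_of_nonpos_of_nonneg (by linarith) hnA
    have : ((fA - DA - CAA * nA s - CAa * na s) * nA s
        + nA s * (-(S / 2))) * Real.exp (-(S / 2) * s) ≤ 0 := by
      apply mul_nonpos_of_nonpos_of_nonneg _ hexp.le
      nlinarith
    nlinarith [this]
  -- g is antitone on [t₀, t]
  have hanti : AntitoneOn g (Set.Icc t₀ t) := by
    have hdiff : ∀ s ∈ Set.Icc t₀ t, HasDerivAt g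
        (((fA - DA - CAA * nA s - CAa * na s) * nA s) * Real.exp (-(S / 2) * s)
          + nA s * (Real.exp (-(S / 2) * s) * (-(S / 2)))) s :=
      fun s hs => hgderiv s hs.1
    apply antitoneOn_of_deriv_nonpos (convex_Icc t₀ t)
    · exact fun s hs => ((hdiff s hs).continuousAt).continuousWithinAt
    · intro s hs
      rw [interior_Icc] at hs
      exact ((hdiff s ⟨hs.1.le, hs.2.le⟩).differentiableAt).differentiableWithinAt
    · intro s hs
      rw [interior_Icc] at hs
      rw [(hgderiv s hs.1.le).deriv]
      exact hgnonpos s hs.1.le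
  have hgle : g t ≤ g t₀ :=
    hanti (Set.left_mem_Icc.mpr ht) (Set.right_mem_Icc.mpr ht) ht
  have hexp0 : 0 < Real.exp (-(S / 2) * t) := Real.exp_pos _
  have : nA t ≤ nA t₀ * Real.exp (-(S / 2) * t₀) / Real.exp (-(S / 2) * t) := by
    rw [le_div_iff₀ hexp0]
    simpa [hg] using hgle
  calc nA t ≤ nA t₀ * Real.exp (-(S / 2) * t₀) / Real.exp (-(S / 2) * t) := this
    _ = nA t₀ * Real.exp (S * (t - t₀) / 2) := by
        rw [mul_div_assoc, ← Real.exp_sub]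
        ring_nf
end

section
/- Let a ∈ (0,1/2), let s₁, s₂ ∈ [a, 1−a], let N ∈ ℕ and let j, k, l be integers with 0 ≤ j ≤ k < l < N. With q_N(j,k,s₁,s₂) = [s₁/(1 − (1−s₁)^{N−k})]·[(1 − (1−s₂)^{N−j})/(1 − (1−s₂)^{k+1−j})], one has |1/q_N(k,l,s₁,s₂) − 1/q_N(j,l,s₂,s₁)| ≤ [4(1 + 1/s₂)/(e·a²·|log(1−a)|)]·|s₂ − s₁| + (1−s₂)^{l+1−k}/s₂³. -/
/-- Ratio of hitting probabilities for the asymmetric nearest-neighbour random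
walk: `q_N(j,k,s₁,s₂) = [s₁/(1−(1−s₁)^{N−k})]·[(1−(1−s₂)^{N−j})/(1−(1−s₂)^{k+1−j})]`. -/
noncomputable def qN (N j k : ℕ) (s₁ s₂ : ℝ) : ℝ :=
  s₁ / (1 - (1 - s₁) ^ (N - k)) *
    ((1 - (1 - s₂) ^ (N - j)) / (1 - (1 - s₂) ^ (k + 1 - j)))

/-- Lipschitz-type bound for powers: `|x^i − y^i| ≤ i ρ^{i-1} |x−y|` (written
with `ρ^i/ρ` to avoid natural subtraction). -/
lemma aux_pow_lip (ρ x y : ℝ) (hρ : 0 < ρ) (hx : 0 ≤ x) (hxρ : x ≤ ρ)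
    (hy : 0 ≤ y) (hyρ : y ≤ ρ) : ∀ i : ℕ, |x ^ i - y ^ i| ≤ i * ρ ^ i / ρ * |x - y| := by
  intro i
  induction i with
  | zero => simp
  | succ n ih =>
      have key : x ^ (n + 1) - y ^ (n + 1) = x * (x ^ n - y ^ n) + (x - y) * y ^ n := by ring
      have h1 : |x ^ (n + 1) - y ^ (n + 1)| ≤ |x| * |x ^ n - y ^ n| + |x - y| * |y ^ n| := by
        rw [key]
        exact (abs_add_le _ _).trans (by rw [abs_mul, abs_mul])
      have hxa : |x| = x := abs_of_nonneg hx
      have hyn : |y ^ n| = y ^ n := abs_of_nonneg (pow_nonneg hy n)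
      have h2 : |x| * |x ^ n - y ^ n| ≤ ρ * (n * ρ ^ n / ρ * |x - y|) := by
        rw [hxa]
        exact mul_le_mul hxρ ih (abs_nonneg _) hρ.le
      have h3 : |x - y| * |y ^ n| ≤ |x - y| * ρ ^ n := by
        rw [hyn]
        exact mul_le_mul_of_nonneg_left (pow_le_pow_left₀ hy hyρ n) (abs_nonneg _)
      have h4 : ρ * (n * ρ ^ n / ρ * |x - y|) + |x - y| * ρ ^ n
          = (↑(n + 1) : ℝ) * ρ ^ (n + 1) / ρ * |x - y| := by
        field_simp
        push_cast
        ring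
      calc |x ^ (n + 1) - y ^ (n + 1)|
          ≤ |x| * |x ^ n - y ^ n| + |x - y| * |y ^ n| := h1
        _ ≤ ρ * (n * ρ ^ n / ρ * |x - y|) + |x - y| * ρ ^ n := add_le_add h2 h3
        _ = (↑(n + 1) : ℝ) * ρ ^ (n + 1) / ρ * |x - y| := h4

/-- Finite sum bound: `∑_{i<n} i ρ^i / ρ ≤ 1/(1−ρ)²` for `0 < ρ < 1`. -/
lemma aux_sum_bound (ρ : ℝ) (hρ0 : 0 < ρ) (hρ1 : ρ < 1) (n : ℕ) :
    ∑ i ∈ Finset.range n, (i : ℝ) * ρ ^ i / ρ ≤ 1 / (1 - ρ) ^ 2 := by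
  have hnorm : ‖ρ‖ < 1 := by rwa [Real.norm_eq_abs, abs_of_pos hρ0]
  have hsummable : Summable (fun i : ℕ => (i : ℝ) * ρ ^ i) :=
    (hasSum_coe_mul_geometric_of_norm_lt_one hnorm).summable
  have htsum : (∑' i : ℕ, (i : ℝ) * ρ ^ i) = ρ / (1 - ρ) ^ 2 :=
    tsum_coe_mul_geometric_of_norm_lt_one hnorm
  have hsum : ∑ i ∈ Finset.range n, (i : ℝ) * ρ ^ i ≤ ρ / (1 - ρ) ^ 2 := by
    rw [← htsum]
    exact Summable.sum_le_tsum _ (fun i _ => by positivity) hsummable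
  have : ∑ i ∈ Finset.range n, (i : ℝ) * ρ ^ i / ρ
      = (∑ i ∈ Finset.range n, (i : ℝ) * ρ ^ i) / ρ := by
    rw [Finset.sum_div]
  rw [this]
  rw [div_le_iff₀ hρ0]
  calc ∑ i ∈ Finset.range n, (i : ℝ) * ρ ^ i ≤ ρ / (1 - ρ) ^ 2 := hsum
    _ = 1 / (1 - ρ) ^ 2 * ρ := by ring

/-- `m ρ^m ≤ 1/(e · (−log ρ))` for `0 < ρ < 1`. -/
lemma aux_m_pow_le (ρ : ℝ) (hρ0 : 0 < ρ) (hρ1 : ρ < 1) (m : ℕ) :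
    (m : ℝ) * ρ ^ m ≤ 1 / (Real.exp 1 * (-Real.log ρ)) := by
  have hlog : Real.log ρ < 0 := Real.log_neg hρ0 hρ1
  set c : ℝ := -Real.log ρ with hc
  have hcpos : 0 < c := by simp only [hc]; linarith
  have hρm : ρ ^ m = Real.exp (-(c * m)) := by
    have h : -(c * (m : ℝ)) = (m : ℝ) * Real.log ρ := by rw [hc]; ring
    rw [h, ← Real.log_pow, Real.exp_log (pow_pos hρ0 m)]
  have hexp_pos : 0 < Real.exp (c * m) := Real.exp_pos _
  have key : (c * m) * Real.exp 1 ≤ Real.exp (c * m) := by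
    have h := Real.add_one_le_exp (c * m - 1)
    have he : Real.exp (c * m - 1) * Real.exp 1 = Real.exp (c * m) := by
      rw [← Real.exp_add]; ring_nf
    calc (c * m) * Real.exp 1 ≤ Real.exp (c * m - 1) * Real.exp 1 :=
          mul_le_mul_of_nonneg_right (by linarith) (Real.exp_pos 1).le
      _ = Real.exp (c * m) := he
  have h2 : (m : ℝ) * (Real.exp (c * m))⁻¹ = (m : ℝ) / Real.exp (c * m) := by
    rw [div_eq_mul_inv]
  rw [hρm, Real.exp_neg, h2, div_le_div_iff₀ hexp_pos (by positivity)]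
  calc (m : ℝ) * (Real.exp 1 * c) = (c * m) * Real.exp 1 := by ring
    _ ≤ Real.exp (c * m) := key
    _ = 1 * Real.exp (c * m) := by ring

/-- Geometric sum identity: `∑_{i<n} (1−s)^i = (1−(1−s)^n)/s` for `s ≠ 0`. -/
lemma aux_geom (s : ℝ) (hs : s ≠ 0) (n : ℕ) :
    ∑ i ∈ Finset.range n, (1 - s) ^ i = (1 - (1 - s) ^ n) / s := by
  have h1 : (1 - s) ≠ 1 := by intro h; apply hs; linarith [h]
  rw [geom_sum_eq h1]
  rw [show (1 - s) - 1 = -s by ring]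
  rw [div_eq_div_iff (by simpa using hs) hs]
  ring

set_option maxHeartbeats 2000000 in
/-- Main estimate, stated for generic exponents. -/
lemma aux_main (a s₁ s₂ : ℝ) (ha0 : 0 < a) (ha2 : a < 1/2)
    (hs₁a : a ≤ s₁) (hs₁b : s₁ ≤ 1 - a) (hs₂a : a ≤ s₂) (hs₂b : s₂ ≤ 1 - a)
    (n m₁ m₂ M₁ M₂ : ℕ) (hn : 1 ≤ n) (hm₂ : 1 ≤ m₂) (hm₂m₁ : m₂ ≤ m₁)
    (hm₂M₂ : m₂ ≤ M₂) (hm₁M₁ : m₁ ≤ M₁) :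
    |(1 - (1 - s₁) ^ n) / s₁ * ((1 - (1 - s₂) ^ m₂) / (1 - (1 - s₂) ^ M₂))
      - (1 - (1 - s₂) ^ n) / s₂ * ((1 - (1 - s₁) ^ m₁) / (1 - (1 - s₁) ^ M₁))| ≤
      4 * (1 + 1 / s₂) / (Real.exp 1 * a ^ 2 * |Real.log (1 - a)|) * |s₂ - s₁|
        + (1 - s₂) ^ m₂ / s₂ ^ 3 := by
  have hs₁0 : 0 < s₁ := lt_of_lt_of_le ha0 hs₁a
  have hs₂0 : 0 < s₂ := lt_of_lt_of_le ha0 hs₂a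
  have hs₁1 : s₁ < 1 := by linarith
  have hs₂1 : s₂ < 1 := by linarith
  have hx0 : (0:ℝ) ≤ 1 - s₁ := by linarith
  have hx1 : 1 - s₁ < 1 := by linarith
  have hxρ : 1 - s₁ ≤ 1 - a := by linarith
  have hy0 : (0:ℝ) ≤ 1 - s₂ := by linarith
  have hy1 : 1 - s₂ < 1 := by linarith
  have hyρ : 1 - s₂ ≤ 1 - a := by linarith
  have hρ0 : (0:ℝ) < 1 - a := by linarith
  have hρ1 : 1 - a < 1 := by linarith
  have hlogneg : Real.log (1 - a) < 0 := Real.log_neg hρ0 hρ1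
  have hL : |Real.log (1 - a)| = -Real.log (1 - a) := abs_of_neg hlogneg
  have hL0 : 0 < -Real.log (1 - a) := by linarith
  have hpow : ∀ (t : ℝ), 0 ≤ t → t < 1 → ∀ e : ℕ, 1 ≤ e → 0 < 1 - t ^ e := by
    intro t ht0 ht1 e he
    have := pow_lt_one₀ ht0 ht1 (Nat.one_le_iff_ne_zero.mp he)
    linarith
  have hdxn : 0 < 1 - (1 - s₁) ^ n := hpow _ hx0 hx1 n hn
  have hdyn : 0 < 1 - (1 - s₂) ^ n := hpow _ hy0 hy1 n hn
  have hdym₂ : 0 < 1 - (1 - s₂) ^ m₂ := hpow _ hy0 hy1 m₂ hm₂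
  have hdyM₂ : 0 < 1 - (1 - s₂) ^ M₂ := hpow _ hy0 hy1 M₂ (le_trans hm₂ hm₂M₂)
  have hdxm₁ : 0 < 1 - (1 - s₁) ^ m₁ := hpow _ hx0 hx1 m₁ (le_trans hm₂ hm₂m₁)
  have hdxM₁ : 0 < 1 - (1 - s₁) ^ M₁ := hpow _ hx0 hx1 M₁ (le_trans (le_trans hm₂ hm₂m₁) hm₁M₁)
  set A1 := (1 - (1 - s₁) ^ n) / s₁ with hA1d
  set A2 := (1 - (1 - s₂) ^ n) / s₂ with hA2d
  set R2 := (1 - (1 - s₂) ^ m₂) / (1 - (1 - s₂) ^ M₂) with hR2d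
  set R1 := (1 - (1 - s₁) ^ m₁) / (1 - (1 - s₁) ^ M₁) with hR1d
  -- basic bounds on R1, R2, A2
  have hR2_nonneg : 0 ≤ R2 := div_nonneg hdym₂.le hdyM₂.le
  have hR1_nonneg : 0 ≤ R1 := div_nonneg hdxm₁.le hdxM₁.le
  have hR2_le1 : R2 ≤ 1 := by
    rw [hR2d, div_le_one hdyM₂]
    have := pow_le_pow_of_le_one hy0 hy1.le hm₂M₂
    linarith
  have hR1_le1 : R1 ≤ 1 := by
    rw [hR1d, div_le_one hdxM₁]
    have := pow_le_pow_of_le_one hx0 hx1.le hm₁M₁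
    linarith
  have h1mR2 : 1 - R2 ≤ (1 - s₂) ^ m₂ := by
    have key : 1 - (1 - s₂) ^ m₂ ≤ R2 := by
      rw [hR2d, le_div_iff₀ hdyM₂]
      nlinarith [pow_nonneg hy0 M₂, hdym₂]
    linarith
  have h1mR1 : 1 - R1 ≤ (1 - s₁) ^ m₁ := by
    have key : 1 - (1 - s₁) ^ m₁ ≤ R1 := by
      rw [hR1d, le_div_iff₀ hdxM₁]
      nlinarith [pow_nonneg hx0 M₁, hdxm₁]
    linarith
  have hA2_nonneg : 0 ≤ A2 := div_nonneg hdyn.le hs₂0.le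
  have hA2_le : A2 ≤ 1 / s₂ := by
    rw [hA2d, div_le_div_iff₀ hs₂0 hs₂0]
    have h := mul_nonneg (pow_nonneg hy0 n) hs₂0.le
    linarith
  -- Lipschitz bound for A1 - A2
  have hA_diff : |A1 - A2| ≤ |s₂ - s₁| / a ^ 2 := by
    have e1 : A1 = ∑ i ∈ Finset.range n, (1 - s₁) ^ i := by
      rw [hA1d, aux_geom s₁ hs₁0.ne' n]
    have e2 : A2 = ∑ i ∈ Finset.range n, (1 - s₂) ^ i := by
      rw [hA2d, aux_geom s₂ hs₂0.ne' n]
    have hxy : (1 - s₁) - (1 - s₂) = s₂ - s₁ := by ring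
    calc |A1 - A2| = |∑ i ∈ Finset.range n, ((1 - s₁) ^ i - (1 - s₂) ^ i)| := by
          rw [e1, e2, Finset.sum_sub_distrib]
      _ ≤ ∑ i ∈ Finset.range n, |(1 - s₁) ^ i - (1 - s₂) ^ i| :=
          Finset.abs_sum_le_sum_abs _ _
      _ ≤ ∑ i ∈ Finset.range n, (i : ℝ) * (1 - a) ^ i / (1 - a) * |s₂ - s₁| := by
          apply Finset.sum_le_sum
          intro i _
          have := aux_pow_lip (1 - a) (1 - s₁) (1 - s₂) hρ0 hx0 hxρ hy0 hyρ i
          rwa [hxy] at this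
      _ = (∑ i ∈ Finset.range n, (i : ℝ) * (1 - a) ^ i / (1 - a)) * |s₂ - s₁| := by
          rw [← Finset.sum_mul]
      _ ≤ (1 / (1 - (1 - a)) ^ 2) * |s₂ - s₁| :=
          mul_le_mul_of_nonneg_right (aux_sum_bound (1 - a) hρ0 hρ1 n) (abs_nonneg _)
      _ = |s₂ - s₁| / a ^ 2 := by
          rw [show (1:ℝ) - (1 - a) = a by ring]
          ring
  -- bound for R2 - R1
  have hRdiff : |R2 - R1| ≤ (1 - s₂) ^ m₂
      + 2 / (Real.exp 1 * (-Real.log (1 - a))) * |s₂ - s₁| := by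
    have hmax : |R2 - R1| ≤ max ((1 - s₂) ^ m₂) ((1 - s₁) ^ m₁) := by
      rw [abs_sub_le_iff]
      constructor
      · calc R2 - R1 ≤ 1 - R1 := by linarith
          _ ≤ (1 - s₁) ^ m₁ := h1mR1
          _ ≤ _ := le_max_right _ _
      · calc R1 - R2 ≤ 1 - R2 := by linarith
          _ ≤ (1 - s₂) ^ m₂ := h1mR2
          _ ≤ _ := le_max_left _ _
    have hxm : (1 - s₁) ^ m₁ ≤ (1 - s₂) ^ m₂
        + 2 / (Real.exp 1 * (-Real.log (1 - a))) * |s₂ - s₁| := by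
      have hstep1 : (1 - s₁) ^ m₁ ≤ (1 - s₁) ^ m₂ :=
        pow_le_pow_of_le_one hx0 hx1.le hm₂m₁
      have hstep2 : |(1 - s₁) ^ m₂ - (1 - s₂) ^ m₂|
          ≤ (m₂ : ℝ) * (1 - a) ^ m₂ / (1 - a) * |s₂ - s₁| := by
        have := aux_pow_lip (1 - a) (1 - s₁) (1 - s₂) hρ0 hx0 hxρ hy0 hyρ m₂
        rwa [show (1 - s₁) - (1 - s₂) = s₂ - s₁ by ring] at this
      have hstep3 : (m₂ : ℝ) * (1 - a) ^ m₂ / (1 - a)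
          ≤ 2 / (Real.exp 1 * (-Real.log (1 - a))) := by
        have hm := aux_m_pow_le (1 - a) hρ0 hρ1 m₂
        have hinv : 1 / (1 - a) ≤ 2 := by
          rw [div_le_iff₀ hρ0]; linarith
        calc (m₂ : ℝ) * (1 - a) ^ m₂ / (1 - a)
            = ((m₂ : ℝ) * (1 - a) ^ m₂) * (1 / (1 - a)) := by ring
          _ ≤ (1 / (Real.exp 1 * (-Real.log (1 - a)))) * 2 := by
              apply mul_le_mul hm hinv (by positivity) (by positivity)
          _ = 2 / (Real.exp 1 * (-Real.log (1 - a))) := by ring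
      have hstep4 : (m₂ : ℝ) * (1 - a) ^ m₂ / (1 - a) * |s₂ - s₁|
          ≤ 2 / (Real.exp 1 * (-Real.log (1 - a))) * |s₂ - s₁| :=
        mul_le_mul_of_nonneg_right hstep3 (abs_nonneg _)
      have habs := le_abs_self ((1 - s₁) ^ m₂ - (1 - s₂) ^ m₂)
      linarith
    refine hmax.trans (max_le ?_ hxm)
    have : (0:ℝ) ≤ 2 / (Real.exp 1 * (-Real.log (1 - a))) * |s₂ - s₁| := by positivity
    linarith
  -- combine
  have hdecomp : A1 * R2 - A2 * R1 = (A1 - A2) * R2 + A2 * (R2 - R1) := by ring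
  have htri : |A1 * R2 - A2 * R1| ≤ |A1 - A2| * |R2| + |A2| * |R2 - R1| := by
    rw [hdecomp]
    exact (abs_add_le _ _).trans (by rw [abs_mul, abs_mul])
  have hmain : |A1 * R2 - A2 * R1| ≤ |s₂ - s₁| / a ^ 2
      + (1 / s₂) * ((1 - s₂) ^ m₂ + 2 / (Real.exp 1 * (-Real.log (1 - a))) * |s₂ - s₁|) := by
    have hb1 : |A1 - A2| * |R2| ≤ (|s₂ - s₁| / a ^ 2) * 1 := by
      apply mul_le_mul hA_diff _ (abs_nonneg _) (by positivity)
      rw [abs_of_nonneg hR2_nonneg]; exact hR2_le1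
    have hb2 : |A2| * |R2 - R1| ≤ (1 / s₂)
        * ((1 - s₂) ^ m₂ + 2 / (Real.exp 1 * (-Real.log (1 - a))) * |s₂ - s₁|) := by
      apply mul_le_mul _ hRdiff (abs_nonneg _) (by positivity)
      rw [abs_of_nonneg hA2_nonneg]; exact hA2_le
    calc |A1 * R2 - A2 * R1| ≤ |A1 - A2| * |R2| + |A2| * |R2 - R1| := htri
      _ ≤ (|s₂ - s₁| / a ^ 2) * 1 + (1 / s₂)
          * ((1 - s₂) ^ m₂ + 2 / (Real.exp 1 * (-Real.log (1 - a))) * |s₂ - s₁|) :=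
          add_le_add hb1 hb2
      _ = _ := by ring
  -- final numeric comparisons
  rw [hL]
  have heL4 : Real.exp 1 * (-Real.log (1 - a)) ≤ 4 := by
    have hle : -Real.log (1 - a) ≤ Real.log 2 := by
      have h1 : Real.log ((2:ℝ)⁻¹) ≤ Real.log (1 - a) :=
        Real.log_le_log (by norm_num) (by linarith)
      rw [Real.log_inv] at h1
      linarith
    have he := Real.exp_one_lt_d9
    have hl2 := Real.log_two_lt_d9
    nlinarith [Real.exp_pos 1, hL0]
  have hc1 : |s₂ - s₁| / a ^ 2
      ≤ 4 / (Real.exp 1 * a ^ 2 * (-Real.log (1 - a))) * |s₂ - s₁| := by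
    rw [div_eq_mul_one_div, mul_comm]
    apply mul_le_mul_of_nonneg_right _ (abs_nonneg _)
    rw [div_le_div_iff₀ (by positivity) (by positivity)]
    nlinarith [pow_pos ha0 2, mul_pos (Real.exp_pos 1) hL0]
  have hc2 : (1 / s₂) * (2 / (Real.exp 1 * (-Real.log (1 - a))) * |s₂ - s₁|)
      ≤ 4 / (Real.exp 1 * a ^ 2 * (-Real.log (1 - a))) * (1 / s₂) * |s₂ - s₁| := by
    have hkey : 2 / (Real.exp 1 * (-Real.log (1 - a)))
        ≤ 4 / (Real.exp 1 * a ^ 2 * (-Real.log (1 - a))) := by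
      rw [div_le_div_iff₀ (by positivity) (by positivity)]
      have ha1 : a ^ 2 ≤ 1 := by nlinarith
      nlinarith [mul_pos (Real.exp_pos 1) hL0]
    calc (1 / s₂) * (2 / (Real.exp 1 * (-Real.log (1 - a))) * |s₂ - s₁|)
        = (2 / (Real.exp 1 * (-Real.log (1 - a)))) * ((1 / s₂) * |s₂ - s₁|) := by ring
      _ ≤ (4 / (Real.exp 1 * a ^ 2 * (-Real.log (1 - a)))) * ((1 / s₂) * |s₂ - s₁|) :=
          mul_le_mul_of_nonneg_right hkey (by positivity)
      _ = _ := by ring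
  have hc3 : (1 / s₂) * (1 - s₂) ^ m₂ ≤ (1 - s₂) ^ m₂ / s₂ ^ 3 := by
    rw [div_eq_mul_one_div ((1 - s₂) ^ m₂) (s₂ ^ 3), mul_comm ((1 - s₂) ^ m₂)]
    apply mul_le_mul_of_nonneg_right _ (pow_nonneg hy0 m₂)
    apply div_le_div_of_nonneg_left (by norm_num) (by positivity)
    nlinarith [mul_nonneg (mul_nonneg hs₂0.le hy0) (by linarith : (0:ℝ) ≤ 1 + s₂)]
  have hexpand : 4 * (1 + 1 / s₂) / (Real.exp 1 * a ^ 2 * (-Real.log (1 - a))) * |s₂ - s₁|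
      = 4 / (Real.exp 1 * a ^ 2 * (-Real.log (1 - a))) * |s₂ - s₁|
        + 4 / (Real.exp 1 * a ^ 2 * (-Real.log (1 - a))) * (1 / s₂) * |s₂ - s₁| := by
    ring
  rw [hexpand]
  have hdist : (1 / s₂) * ((1 - s₂) ^ m₂
      + 2 / (Real.exp 1 * (-Real.log (1 - a))) * |s₂ - s₁|)
      = (1 / s₂) * (1 - s₂) ^ m₂
        + (1 / s₂) * (2 / (Real.exp 1 * (-Real.log (1 - a))) * |s₂ - s₁|) := by ring
  rw [hdist] at hmain
  linarith

/-- Continuity estimate on inverse ratios of hitting probabilities: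
`|1/q_N(k,l,s₁,s₂) − 1/q_N(j,l,s₂,s₁)|
  ≤ 4(1+1/s₂)/(e a² |log(1−a)|) · |s₂ − s₁| + (1−s₂)^{l+1−k}/s₂³`. -/
theorem qN_inverse_difference_bound
    (a : ℝ) (ha : a ∈ Set.Ioo (0:ℝ) (1/2))
    (s₁ s₂ : ℝ) (h₁ : s₁ ∈ Set.Icc a (1 - a)) (h₂ : s₂ ∈ Set.Icc a (1 - a))
    (N j k l : ℕ) (hjk : j ≤ k) (hkl : k < l) (hlN : l < N) :
    |1 / qN N k l s₁ s₂ - 1 / qN N j l s₂ s₁| ≤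
      4 * (1 + 1 / s₂) / (Real.exp 1 * a ^ 2 * |Real.log (1 - a)|) * |s₂ - s₁|
        + (1 - s₂) ^ (l + 1 - k) / s₂ ^ 3 := by
  obtain ⟨ha0, ha2⟩ := ha
  obtain ⟨hs₁a, hs₁b⟩ := h₁
  obtain ⟨hs₂a, hs₂b⟩ := h₂
  have e1 : 1 / qN N k l s₁ s₂ = (1 - (1 - s₁) ^ (N - l)) / s₁
      * ((1 - (1 - s₂) ^ (l + 1 - k)) / (1 - (1 - s₂) ^ (N - k))) := by
    rw [qN, one_div, mul_inv, inv_div, inv_div]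
  have e2 : 1 / qN N j l s₂ s₁ = (1 - (1 - s₂) ^ (N - l)) / s₂
      * ((1 - (1 - s₁) ^ (l + 1 - j)) / (1 - (1 - s₁) ^ (N - j))) := by
    rw [qN, one_div, mul_inv, inv_div, inv_div]
  rw [e1, e2]
  exact aux_main a s₁ s₂ ha0 ha2 hs₁a hs₁b hs₂a hs₂b
    (N - l) (l + 1 - j) (l + 1 - k) (N - j) (N - k)
    (by omega) (by omega) (by omega) (by omega) (by omega)
end

section
/- Let a ∈ (0,1/2) and let α, β be positive integers. Then for every x ∈ [a, 1−a], the derivative of the function f_{α,β} : x ↦ (1 − x^α)/(1 − x^β) satisfies |f_{α,β}'(x)| = |(β x^{β−1}(1 − x^α) − α x^{α−1}(1 − x^β))/(1 − x^β)²| ≤ 4/(e·a²·|log(1−a)|). -/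
/-! Both terms of the quotient-rule numerator are nonnegative, so the absolute value of their
difference is at most the larger one. Writing `1 - x ^ n = (1 - x) ∑_{i<n} x ^ i` gives
`n x ^ (n - 1) (1 - x) ≤ 1 - x ^ n`, and since `1 - x` and `1 - x ^ β` are at least `a` on
`[a, 1 - a]`, each term divided by `(1 - x ^ β) ^ 2` is at most `1 / a ^ 2`. Finally
`|log (1 - a)| ≤ 1 / (1 - a) - 1 ≤ 1` for `a ≤ 1 / 2`, so `e |log (1 - a)| < 3 < 4`. -/

open Finset Real

theorem natCast_mul_pow_pred_mul_one_sub_le {x : ℝ} (hx0 : 0 ≤ x) (hx1 : x ≤ 1) (n : ℕ) :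
    n * x ^ (n - 1) * (1 - x) ≤ 1 - x ^ n := by
  have hsum : n * x ^ (n - 1) ≤ ∑ i ∈ range n, x ^ i := by
    simpa using sum_le_sum fun i hi =>
      pow_le_pow_of_le_one hx0 hx1 (Nat.le_pred_of_lt (mem_range.mp hi))
  rw [← mul_neg_geom_sum, mul_comm (1 - x)]
  exact mul_le_mul_of_nonneg_right hsum (by linarith)

theorem hasDerivAt_one_sub_pow_div_one_sub_pow (α β : ℕ) {x : ℝ} (hx : 1 - x ^ β ≠ 0) :
    HasDerivAt (fun y : ℝ => (1 - y ^ α) / (1 - y ^ β))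
      ((β * x ^ (β - 1) * (1 - x ^ α) - α * x ^ (α - 1) * (1 - x ^ β)) / (1 - x ^ β) ^ 2) x :=
  (((hasDerivAt_pow α x).const_sub 1).div ((hasDerivAt_pow β x).const_sub 1) hx).congr_deriv
    (by ring)

theorem abs_deriv_one_sub_pow_div_one_sub_pow_le {a x : ℝ} (ha : 0 < a) (hx0 : 0 ≤ x)
    (hxa : x ≤ 1 - a) (α : ℕ) {β : ℕ} (hβ : 0 < β) :
    |(β * x ^ (β - 1) * (1 - x ^ α) - α * x ^ (α - 1) * (1 - x ^ β)) / (1 - x ^ β) ^ 2|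
      ≤ 1 / a ^ 2 := by
  have hx1 : x ≤ 1 := by linarith
  have hscaled (n : ℕ) : a * (n * x ^ (n - 1)) ≤ 1 - x ^ n :=
    calc a * (n * x ^ (n - 1)) ≤ (1 - x) * (n * x ^ (n - 1)) := by gcongr; linarith
      _ ≤ 1 - x ^ n := by
        rw [mul_comm]; exact natCast_mul_pow_pred_mul_one_sub_le hx0 hx1 n
  have hDβ : a ≤ 1 - x ^ β := by linarith [pow_le_of_le_one hx0 hx1 hβ.ne']
  have hDα0 : 0 ≤ 1 - x ^ α := by linarith [pow_le_one₀ hx0 hx1 (n := α)]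
  have hDα1 : 1 - x ^ α ≤ 1 := by linarith [pow_nonneg hx0 α]
  have hD : 0 < 1 - x ^ β := ha.trans_le hDβ
  have hB : 0 ≤ (β : ℝ) * x ^ (β - 1) := by positivity
  have hfirst : β * x ^ (β - 1) * (1 - x ^ α) / (1 - x ^ β) ^ 2 ≤ 1 / a ^ 2 := by
    rw [div_le_div_iff₀ (by positivity) (by positivity)]
    nlinarith [hscaled β, mul_le_mul_of_nonneg_left hDα1 hB, mul_le_mul hDβ hDβ ha.le hD.le]
  have hsecond : α * x ^ (α - 1) * (1 - x ^ β) / (1 - x ^ β) ^ 2 ≤ 1 / a ^ 2 := by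
    rw [div_le_div_iff₀ (by positivity) (by positivity)]
    have hAa : a * (α * x ^ (α - 1)) ≤ 1 := (hscaled α).trans hDα1
    nlinarith [mul_le_mul hAa (mul_le_mul_of_nonneg_right hDβ hD.le) (by positivity) zero_le_one]
  rw [sub_div]
  exact abs_sub_le_of_nonneg_of_le (by positivity) hfirst (by positivity) hsecond

theorem exp_one_mul_abs_log_one_sub_lt_three {a : ℝ} (ha0 : 0 ≤ a) (ha : a ≤ 1 / 2) :
    exp 1 * |log (1 - a)| < 3 := by
  have hlog : |log (1 - a)| ≤ 1 := by
    rw [abs_of_nonpos (log_nonpos (by linarith) (by linarith)), ← log_inv]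
    have := log_le_sub_one_of_pos (inv_pos.mpr (by linarith : (0 : ℝ) < 1 - a))
    have : (1 - a)⁻¹ ≤ 2 := by rw [inv_le_comm₀ (by linarith) two_pos]; linarith
    linarith
  calc exp 1 * |log (1 - a)| ≤ exp 1 * 1 := by gcongr
    _ < 3 := by simpa using exp_one_lt_three

theorem deriv_ratio_pow_bound_general
    (a : ℝ) (ha : a ∈ Set.Ioo (0:ℝ) (1/2))
    (α β : ℕ) (hβ : 0 < β) :
    ∀ x ∈ Set.Icc a (1 - a),
      HasDerivAt (fun y : ℝ => (1 - y ^ α) / (1 - y ^ β))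
        (((β : ℝ) * x ^ (β - 1) * (1 - x ^ α)
            - (α : ℝ) * x ^ (α - 1) * (1 - x ^ β)) / (1 - x ^ β) ^ 2) x ∧
      |((β : ℝ) * x ^ (β - 1) * (1 - x ^ α)
          - (α : ℝ) * x ^ (α - 1) * (1 - x ^ β)) / (1 - x ^ β) ^ 2| ≤
        4 / (Real.exp 1 * a ^ 2 * |Real.log (1 - a)|) := by
  obtain ⟨ha0, ha2⟩ := ha
  rintro x ⟨hax, hxa⟩
  have hx0 : 0 ≤ x := ha0.le.trans hax
  have hD : 1 - x ^ β ≠ 0 := by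
    linarith [pow_le_of_le_one hx0 (by linarith) hβ.ne']
  refine ⟨hasDerivAt_one_sub_pow_div_one_sub_pow α β hD,
    (abs_deriv_one_sub_pow_div_one_sub_pow_le ha0 hx0 hxa α hβ).trans ?_⟩
  have hL : 0 < |log (1 - a)| := abs_pos.mpr (log_neg (by linarith) (by linarith)).ne
  have hexp := exp_one_mul_abs_log_one_sub_lt_three ha0.le ha2.le
  rw [div_le_div_iff₀ (by positivity) (by positivity)]
  nlinarith [mul_le_mul_of_nonneg_right hexp.le (sq_nonneg a)]

/-- Uniform derivative bound for `f_{α,β}(x) = (1 − x^α)/(1 − x^β)` on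
`[a, 1−a]` with `a ∈ (0,1/2)`: the derivative equals
`(β x^{β−1}(1−x^α) − α x^{α−1}(1−x^β))/(1−x^β)²` and its absolute value is at
most `4/(e a² |log(1−a)|)`, uniformly in the positive integers `α, β`. -/
theorem deriv_ratio_pow_bound
    (a : ℝ) (ha : a ∈ Set.Ioo (0:ℝ) (1/2))
    (α β : ℕ) (hα : 0 < α) (hβ : 0 < β) :
    ∀ x ∈ Set.Icc a (1 - a),
      HasDerivAt (fun y : ℝ => (1 - y ^ α) / (1 - y ^ β))
        (((β : ℝ) * x ^ (β - 1) * (1 - x ^ α)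
            - (α : ℝ) * x ^ (α - 1) * (1 - x ^ β)) / (1 - x ^ β) ^ 2) x ∧
      |((β : ℝ) * x ^ (β - 1) * (1 - x ^ α)
          - (α : ℝ) * x ^ (α - 1) * (1 - x ^ β)) / (1 - x ^ β) ^ 2| ≤
        4 / (Real.exp 1 * a ^ 2 * |Real.log (1 - a)|) :=
  deriv_ratio_pow_bound_general a ha α β hβ
end

section
/- Let s ∈ (0,1), let N ∈ ℕ and let j, k, l be integers with 0 ≤ j ≤ k ≤ l < N. Then [(1 − (1−s)^{k−j})·((1−s)^{l+1−k} − (1−s)^{N−k})] / [(1 − (1−s)^{N−k})·(1 − (1−s)^{N−j})] ≤ (1−s)^{l+1−k}/s². -/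
/-- Algebraic bound on the difference of hitting probabilities of the
asymmetric random walk: for `s ∈ (0,1)` and `0 ≤ j ≤ k ≤ l < N`,
`[(1−(1−s)^{k−j})((1−s)^{l+1−k} − (1−s)^{N−k})] /
 [(1−(1−s)^{N−k})(1−(1−s)^{N−j})] ≤ (1−s)^{l+1−k}/s²`. -/
theorem hitting_prob_difference_bound
    (s : ℝ) (hs : s ∈ Set.Ioo (0:ℝ) 1)
    (N j k l : ℕ) (hjk : j ≤ k) (hkl : k ≤ l) (hlN : l < N) :
    (1 - (1 - s) ^ (k - j)) * ((1 - s) ^ (l + 1 - k) - (1 - s) ^ (N - k)) /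
        ((1 - (1 - s) ^ (N - k)) * (1 - (1 - s) ^ (N - j))) ≤
      (1 - s) ^ (l + 1 - k) / s ^ 2 := by
  obtain ⟨hs0, hs1⟩ := hs
  set r : ℝ := 1 - s with hr
  have hr0 : 0 ≤ r := by simp [hr]; linarith
  have hr1 : r ≤ 1 := by simp [hr]; linarith
  -- pow facts
  have hpow_le_one : ∀ m : ℕ, r ^ m ≤ 1 := fun m => pow_le_one₀ hr0 hr1
  have hpow_nonneg : ∀ m : ℕ, 0 ≤ r ^ m := fun m => pow_nonneg hr0 m
  have hmono : ∀ {m n : ℕ}, m ≤ n → r ^ n ≤ r ^ m :=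
    fun {m n} h => pow_le_pow_of_le_one hr0 hr1 h
  have h1 : (1 : ℕ) ≤ N - k := by omega
  have h2 : (1 : ℕ) ≤ N - j := by omega
  have h3 : l + 1 - k ≤ N - k := by omega
  have hs_le1 : s ≤ 1 - r ^ (N - k) := by
    have := hmono h1
    simp only [pow_one] at this
    simp [hr] at this ⊢; linarith
  have hs_le2 : s ≤ 1 - r ^ (N - j) := by
    have := hmono h2
    simp only [pow_one] at this
    simp [hr] at this ⊢; linarith
  have hnum : (1 - r ^ (k - j)) * (r ^ (l + 1 - k) - r ^ (N - k)) ≤ r ^ (l + 1 - k) := by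
    have hb : 0 ≤ r ^ (l + 1 - k) - r ^ (N - k) := by linarith [hmono h3]
    have ha : 1 - r ^ (k - j) ≤ 1 := by linarith [hpow_nonneg (k - j)]
    calc (1 - r ^ (k - j)) * (r ^ (l + 1 - k) - r ^ (N - k))
        ≤ r ^ (l + 1 - k) - r ^ (N - k) := mul_le_of_le_one_left hb ha
      _ ≤ r ^ (l + 1 - k) := by linarith [hpow_nonneg (N - k)]
  have hden : s ^ 2 ≤ (1 - r ^ (N - k)) * (1 - r ^ (N - j)) := by
    have : s * s ≤ (1 - r ^ (N - k)) * (1 - r ^ (N - j)) :=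
      mul_le_mul hs_le1 hs_le2 hs0.le (by linarith)
    calc s ^ 2 = s * s := sq s
      _ ≤ _ := this
  exact div_le_div₀ (hpow_nonneg _) hnum (by positivity) hden
end

section
/- Let s, s' ∈ (0,1). Then (1/log N)·Σ_{k=1}^{N−1} [(1 − (1−s)^{k+1})·(1 − (1−s')^{N−k})] / [(k+1)·s'·(1 − (1−s)^N)] converges to 1/s' as N → ∞. -/
/-!
Up to the factor `1 / (s' (1 - (1 - s)^N)) → 1 / s'`, the sum is a harmonic sum whose `k`-th
weight `(1 - (1 - s)^(k+1)) (1 - (1 - s')^(N-k))` differs from `1` by at most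
`(1 - s)^(k+1) + (1 - s')^(N-k)`. These defects add up to at most two geometric series, so the
weighted sum stays within `O(1)` of the harmonic number `H_N = log N + O(1)`.
-/

open Filter Finset Real Asymptotics Topology

theorem sum_pow_le_inv_one_sub_of_injOn {r : ℝ} (h0 : 0 ≤ r) (h1 : r < 1) {s : Finset ℕ}
    {g : ℕ → ℕ} (hg : Set.InjOn g s) : ∑ k ∈ s, r ^ g k ≤ (1 - r)⁻¹ := by
  rw [← sum_image (f := (r ^ ·)) hg, ← tsum_geometric_of_lt_one h0 h1]
  exact (summable_geometric_of_lt_one h0 h1).sum_le_tsum _ fun k _ => pow_nonneg h0 k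

theorem abs_one_sub_mul_one_sub_div_sub_div_le {x y t : ℝ} (hx0 : 0 ≤ x)
    (hy0 : 0 ≤ y) (hy1 : y ≤ 1) (ht : 1 ≤ t) :
    |(1 - x) * (1 - y) / t - 1 / t| ≤ x + y := by
  have ht0 : 0 < t := by linarith
  rw [← sub_div, abs_div, abs_of_pos ht0, div_le_iff₀ ht0, abs_le]
  constructor <;> nlinarith [mul_nonneg hx0 hy0]

theorem sum_Icc_one_div_succ (n : ℕ) :
    ∑ k ∈ Icc 1 n, 1 / ((k : ℝ) + 1) = harmonic (n + 1) - 1 := by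
  induction n with
  | zero => simp
  | succ n ih =>
    rw [sum_Icc_succ_top (by omega), ih, harmonic_succ (n + 1)]
    push_cast
    ring

theorem abs_harmonic_sub_log_le_one {n : ℕ} (hn : 1 ≤ n) : |(harmonic n : ℝ) - log n| ≤ 1 := by
  have hlog : log n ≤ log ↑(n + 1) := log_le_log (by exact_mod_cast hn) (by push_cast; linarith)
  rw [abs_le]
  constructor <;> linarith [log_add_one_le_harmonic n, harmonic_le_one_add_log n]

theorem tendsto_div_log_of_abs_sub_log_le {f : ℕ → ℝ} {C : ℝ}
    (h : ∀ᶠ N in atTop, |f N - log N| ≤ C) :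
    Tendsto (fun N => f N / log N) atTop (𝓝 1) := by
  have hlog : Tendsto (fun N : ℕ => log N) atTop atTop :=
    tendsto_log_atTop.comp tendsto_natCast_atTop_atTop
  have hsmall : (fun N => f N - log N) =o[atTop] fun N : ℕ => log N :=
    (IsBigO.of_bound C (by simpa using h) : _ =O[atTop] fun _ => (1 : ℝ)).trans_isLittleO
      (isLittleO_const_log_atTop.comp_tendsto tendsto_natCast_atTop_atTop)
  have hequiv : f ~[atTop] fun N : ℕ => log N := by
    have := (IsEquivalent.refl (u := fun N : ℕ => log N)).add_isLittleO hsmall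
    rwa [show ((fun N : ℕ => log N) + fun N => f N - log N) = f by ext N; simp] at this
  exact (isEquivalent_iff_tendsto_one (hlog.eventually_ne_atTop 0)).mp hequiv

/-- With `a = 1 - s`, `b = 1 - s'` this is `s' (1 - (1 - s)^N) Σ_k [(k+1) q_N(0,k,s',s)]⁻¹`. -/
noncomputable def weightedHarmonic (a b : ℝ) (N : ℕ) : ℝ :=
  ∑ k ∈ Icc 1 (N - 1), (1 - a ^ (k + 1)) * (1 - b ^ (N - k)) / ((k : ℝ) + 1)

theorem abs_weightedHarmonic_sub_harmonic_le {a b : ℝ} (ha0 : 0 ≤ a) (ha1 : a < 1) (hb0 : 0 ≤ b)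
    (hb1 : b < 1) {N : ℕ} (hN : 1 ≤ N) :
    |weightedHarmonic a b N - (harmonic N - 1)| ≤ (1 - a)⁻¹ + (1 - b)⁻¹ := by
  obtain ⟨n, rfl⟩ := Nat.exists_eq_add_of_le' hN
  have hinj : Set.InjOn (fun k => n + 1 - k) (Icc 1 n) := fun i hi j hj hij => by
    simp only [coe_Icc, Set.mem_Icc] at hi hj hij
    omega
  rw [← sum_Icc_one_div_succ, weightedHarmonic, Nat.add_sub_cancel, ← sum_sub_distrib]
  calc _ ≤ ∑ k ∈ Icc 1 n, (a ^ (k + 1) + b ^ (n + 1 - k)) :=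
        (abs_sum_le_sum_abs _ _).trans <| sum_le_sum fun k _ =>
          abs_one_sub_mul_one_sub_div_sub_div_le (pow_nonneg ha0 _) (pow_nonneg hb0 _)
            (pow_le_one₀ hb0 hb1.le) (by linarith [k.cast_nonneg (α := ℝ)])
    _ ≤ _ := by
      rw [sum_add_distrib]
      exact add_le_add (sum_pow_le_inv_one_sub_of_injOn ha0 ha1 (add_left_injective 1).injOn)
        (sum_pow_le_inv_one_sub_of_injOn hb0 hb1 hinj)

theorem tendsto_weightedHarmonic_div_log {a b : ℝ} (ha0 : 0 ≤ a) (ha1 : a < 1) (hb0 : 0 ≤ b)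
    (hb1 : b < 1) :
    Tendsto (fun N => weightedHarmonic a b N / log N) atTop (𝓝 1) := by
  refine tendsto_div_log_of_abs_sub_log_le (C := (1 - a)⁻¹ + (1 - b)⁻¹ + 2) ?_
  filter_upwards [eventually_ge_atTop 1] with N hN
  have hw := abs_weightedHarmonic_sub_harmonic_le ha0 ha1 hb0 hb1 hN
  have hh := abs_harmonic_sub_log_le_one hN
  rw [abs_le] at *
  constructor <;> linarith

/-- Asymptotics of the expected number of recombination opportunities:
`(1/log N) Σ_{k=1}^{N−1} (1−(1−s)^{k+1})(1−(1−s')^{N−k}) /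
  ((k+1) s' (1−(1−s)^N)) → 1/s'` as `N → ∞`. -/
theorem recombination_sum_asymptotics
    (s s' : ℝ) (hs : s ∈ Set.Ioo (0:ℝ) 1) (hs' : s' ∈ Set.Ioo (0:ℝ) 1) :
    Tendsto (fun N : ℕ =>
        (1 / Real.log N) * ∑ k ∈ Finset.Icc 1 (N - 1),
          (1 - (1 - s) ^ (k + 1)) * (1 - (1 - s') ^ (N - k)) /
            (((k : ℝ) + 1) * s' * (1 - (1 - s) ^ N)))
      atTop (nhds (1 / s')) := by
  obtain ⟨hs0, hs1⟩ := hs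
  obtain ⟨hs'0, hs'1⟩ := hs'
  have hsum : Tendsto (fun N => weightedHarmonic (1 - s) (1 - s') N / log N) atTop (𝓝 1) :=
    tendsto_weightedHarmonic_div_log (by linarith) (by linarith) (by linarith) (by linarith)
  have hnorm : Tendsto (fun N : ℕ => 1 / (s' * (1 - (1 - s) ^ N))) atTop (𝓝 (1 / s')) := by
    have hpow := tendsto_pow_atTop_nhds_zero_of_lt_one (r := 1 - s) (by linarith) (by linarith)
    have hlim_ne : s' * (1 - 0) ≠ 0 := by simpa using hs'0.ne'
    simpa using ((tendsto_const_nhds.sub hpow).const_mul s').inv₀ hlim_ne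
  refine (one_mul (1 / s') ▸ hsum.mul hnorm).congr fun N => ?_
  simp only [weightedHarmonic, sum_div, mul_sum, sum_mul]
  exact sum_congr rfl fun k _ => by simp only [mul_assoc _ s', ← div_div]; ring
end
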